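/- For n ≥ 0 and s ≥ 0, T_n^{(r,k)}(x|λ) = Σ_{m=0}^{n} [C(n,m) Σ_{l=0}^{n-m} (C(n-m,l)/C(s+l,l)) S₂(l+s,s) T_{n-m-l}^{(r,k)}(λ)] 𝔹_m^{(s)}(x), where 𝔹_m^{(s)}(x) are Bernoulli polynomials of order s. -/

import Mathlib

open PowerSeries Finset

/-- e^{xt} as a formal power series. -/
noncomputable def expX (x : ℂ) : PowerSeries ℂ := rescale x (exp ℂ)

/-- 1 - e^{-t} as a formal power series. -/
noncomputable def oneSubExpNeg : PowerSeries ℂ := 1 - rescale (-1) (exp ℂ)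

/-- Li_k(1-e^{-t}) = Σ_{m≥1} (1-e^{-t})^m / m^k as a formal power series. -/
noncomputable def polyLogC (k : ℤ) : PowerSeries ℂ :=
  mk fun n => ∑ m ∈ Finset.Icc 1 n, (coeff n (oneSubExpNeg ^ m)) * ((m : ℂ) ^ k)⁻¹

/-- integer power of a power series (inverse via `PowerSeries.inv`). -/
noncomputable def zpowS (f : PowerSeries ℂ) (r : ℤ) : PowerSeries ℂ :=
  f ^ r.toNat * (f⁻¹) ^ (-r).toNat

/-- (1-λ)/(e^t-λ). -/
noncomputable def feBase (l : ℂ) : PowerSeries ℂ :=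
  C (1 - l) * (exp ℂ - C l)⁻¹

/-- exponential generating function Σ f(n) t^n/n!. -/
noncomputable def GF (f : ℕ → ℂ) : PowerSeries ℂ := mk fun n => f n / n.factorial

/-- Stirling numbers of the second kind: (e^t-1)^m = m! Σ_l S2(l,m) t^l/l!. -/
noncomputable def S2 (n m : ℕ) : ℂ :=
  (n.factorial : ℂ) / (m.factorial : ℂ) * coeff n ((exp ℂ - 1) ^ m)

/-!
Both sides are coefficients of exponential generating functions. The defining identity of `T`
at `x` and at `0` gives `Σ T_n(x|λ) tⁿ/n! = (Σ T_n(λ) tⁿ/n!) e^{xt}`, and the one of the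
Bernoulli polynomials gives `e^{xt} = ((e^t - 1)/t)^s Σ 𝔹_m^{(s)}(x) tᵐ/m!`. Since
`(e^t - 1)^s = s! Σ_j S₂(j, s) tʲ/j!`, the series `((e^t - 1)/t)^s` has `l`-th exponential
coefficient `S₂(l + s, s) / C(s + l, l)`; comparing coefficients of the product of three
exponential generating functions gives the formula.
-/

lemma coeff_GF (f : ℕ → ℂ) (n : ℕ) : coeff n (GF f) = f n / n.factorial := coeff_mk n _

lemma GF_injective : Function.Injective GF := by
  intro f g h
  funext n
  have hn := congrArg (coeff n) h
  rwa [coeff_GF, coeff_GF, div_left_inj' (Nat.cast_ne_zero.mpr n.factorial_ne_zero)] at hn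

lemma GF_mul (f g : ℕ → ℂ) :
    GF f * GF g = GF (fun n => ∑ m ∈ range (n + 1), (n.choose m : ℂ) * f m * g (n - m)) := by
  ext n
  rw [coeff_mul, Nat.sum_antidiagonal_eq_sum_range_succ_mk, coeff_GF, sum_div]
  refine sum_congr rfl fun m hm => ?_
  rw [coeff_GF, coeff_GF, Nat.cast_choose ℂ (Nat.lt_succ_iff.mp (mem_range.mp hm))]
  have : (n.factorial : ℂ) ≠ 0 := Nat.cast_ne_zero.mpr n.factorial_ne_zero
  field_simp

lemma exp_sub_one_ne_zero : (exp ℂ - 1 : PowerSeries ℂ) ≠ 0 := fun h => by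
  simpa [coeff_exp] using congrArg (coeff 1) h

lemma oneSubExpNeg_ne_zero : oneSubExpNeg ≠ 0 := fun h => by
  simpa [oneSubExpNeg, coeff_rescale, coeff_exp, coeff_one] using congrArg (coeff 1) h

lemma expX_zero : expX 0 = 1 := by
  simp [expX, rescale_zero]

lemma S2_add_div_choose (s l : ℕ) :
    S2 (l + s) s / ((s + l).choose l : ℂ) = l.factorial * coeff (l + s) ((exp ℂ - 1) ^ s) := by
  rw [S2, add_comm s l, Nat.cast_add_choose]
  have : ((l + s).factorial : ℂ) ≠ 0 := Nat.cast_ne_zero.mpr (l + s).factorial_ne_zero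
  have : (s.factorial : ℂ) ≠ 0 := Nat.cast_ne_zero.mpr s.factorial_ne_zero
  field_simp

lemma GF_S2_div_choose_mul_X_pow (s : ℕ) :
    GF (fun l => S2 (l + s) s / ((s + l).choose l : ℂ)) * X ^ s = (exp ℂ - 1) ^ s := by
  have hX : (X : PowerSeries ℂ) ∣ exp ℂ - 1 := by simp [X_dvd_iff]
  obtain ⟨q, hq⟩ := pow_dvd_pow_of_dvd hX s
  suffices GF (fun l => S2 (l + s) s / ((s + l).choose l : ℂ)) = q by rw [this, hq, mul_comm]
  ext l
  rw [coeff_GF, S2_add_div_choose, hq, coeff_X_pow_mul,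
    mul_div_cancel_left₀ _ (Nat.cast_ne_zero.mpr l.factorial_ne_zero)]

lemma eq_sum_of_GF_eq_mul_mul {f g h b : ℕ → ℂ} (hf : GF f = GF g * GF h * GF b) (n : ℕ) :
    f n = ∑ m ∈ range (n + 1),
      ((n.choose m : ℂ) * ∑ l ∈ range (n - m + 1), ((n - m).choose l : ℂ) * g l * h (n - m - l)) *
        b m := by
  rw [GF_mul, mul_comm, GF_mul] at hf
  rw [congrFun (GF_injective hf) n]
  refine sum_congr rfl fun m _ => ?_
  ring

theorem stmt10_general (lam : ℂ) (r k : ℤ) (s : ℕ) (T Bb : ℕ → ℂ → ℂ)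
    (hT : ∀ x : ℂ, oneSubExpNeg * GF (fun n => T n x)
        = zpowS (feBase lam) (r) * polyLogC (k) * expX x)
    (hBb : ∀ x : ℂ, (exp ℂ - 1) ^ s * GF (fun n => Bb n x) = (X : PowerSeries ℂ) ^ s * expX x) :
    ∀ (n : ℕ) (x : ℂ),
      T n x = ∑ m ∈ range (n + 1),
        ((n.choose m : ℂ) * ∑ l ∈ range (n - m + 1),
          ((n - m).choose l : ℂ) / ((s + l).choose l : ℂ) * S2 (l + s) s * T (n - m - l) 0) *
        Bb m x := by
  intro n x
  have hTx : GF (fun n => T n x) = GF (fun n => T n 0) * expX x := by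
    apply mul_left_cancel₀ oneSubExpNeg_ne_zero
    rw [hT x, ← mul_assoc, hT 0, expX_zero, mul_one]
  have hGF : GF (fun n => T n x) = GF (fun l => S2 (l + s) s / ((s + l).choose l : ℂ)) *
      GF (fun n => T n 0) * GF (fun n => Bb n x) := by
    apply mul_left_cancel₀ (pow_ne_zero s exp_sub_one_ne_zero)
    calc (exp ℂ - 1) ^ s * GF (fun n => T n x)
        = GF (fun l => S2 (l + s) s / ((s + l).choose l : ℂ)) * GF (fun n => T n 0) *
            (X ^ s * expX x) := by
          rw [hTx, ← GF_S2_div_choose_mul_X_pow]; ring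
      _ = _ := by rw [← hBb x]; ring
  rw [eq_sum_of_GF_eq_mul_mul hGF n]
  refine sum_congr rfl fun m _ => congrArg (· * Bb m x) (congrArg _ (sum_congr rfl fun l _ => ?_))
  ring

theorem stmt10 (lam : ℂ) (hlam : lam ≠ 1) (r k : ℤ) (s : ℕ) (T Bb : ℕ → ℂ → ℂ)
    (hT : ∀ x : ℂ, oneSubExpNeg * GF (fun n => T n x)
        = zpowS (feBase lam) (r) * polyLogC (k) * expX x)
    (hBb : ∀ x : ℂ, (exp ℂ - 1) ^ s * GF (fun n => Bb n x) = (X : PowerSeries ℂ) ^ s * expX x) :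
    ∀ (n : ℕ) (x : ℂ),
      T n x = ∑ m ∈ range (n + 1),
        ((n.choose m : ℂ) * ∑ l ∈ range (n - m + 1),
          ((n - m).choose l : ℂ) / ((s + l).choose l : ℂ) * S2 (l + s) s * T (n - m - l) 0) *
        Bb m x :=
  stmt10_general lam r k s T Bb hT hBb
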